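/- arXiv:math/0108136 — 2 statements merged into one kernel-verified Lean document; each statement's English description precedes it below -/
import Mathlib

section
/- Primed-index invariance of the q-epsilon tensor: Σ_{j_1,...,j_N} ε_q^{j_1...j_N} g_{j_1 i_1}⋯g_{j_N i_N} = ε_q^{i_1'...i_N'} = (−1)^{⌊N/2⌋} ε_q^{i_1...i_N} for all index tuples (i_1,...,i_N), where a'=N+1−a and g_{ab}=δ_{a,b'}. -/
/-!
Contracting with `g` just substitutes `j = i'`. For the sign, `a ↦ a'` reverses the order, so
the inversions of `i'` are the non-inversions of `i`, and `q(a', b') = q(a, b)` keeps their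
factors. Since `q(a, b) q(b, a) = 1`, the product of `−q` over the non-inversions of a
permutation divided by the product over its inversions is the product of `−q(a, b)` over all
`a < b`, whatever the permutation. In that product the involution `(a, b) ↦ (b', a')` pairs up
factors `q` with product `1` and fixes only the pairs `(a, a')`, where `q(a, a') = 1`; what is left
is `(−1)^(N choose 2) = (−1)^⌊N/2⌋`.
-/

/-- The q-epsilon tensor on `N` letters: `ε_q^{1...N} = 1`, it vanishes on
tuples with a repeated index, and swapping two adjacent entries `...ab...`
produces a factor `−q(a,b)` (so `ε_q^{...ab...} = −q(a,b) ε_q^{...ba...}`).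
Explicitly, on an injective tuple it is the product over all inversions of
the corresponding factors `−q`. -/
def epsQ {N : ℕ} (q : Fin N → Fin N → ℂ) (i : Fin N → Fin N) : ℂ :=
  if Function.Injective i then
    ∏ p ∈ Finset.univ.filter (fun p : Fin N × Fin N => p.1 < p.2 ∧ i p.2 < i p.1),
      (-(q (i p.1) (i p.2)))
  else 0

open Finset

theorem Fintype.sum_mul_prod_ite_eq {ι β R : Type*} [Fintype ι] [DecidableEq β]
    [Fintype (ι → β)] [CommSemiring R] (f : (ι → β) → R) (x : ι → β) :
    ∑ j, f j * ∏ k, (if j k = x k then (1 : R) else 0) = f x := by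
  simp only [Fintype.prod_boole, ← funext_iff, mul_ite, mul_one, mul_zero, sum_ite_eq']

theorem neg_one_pow_choose_two {R : Type*} [Monoid R] [HasDistribNeg R] (n : ℕ) :
    (-1 : R) ^ n.choose 2 = (-1) ^ (n / 2) := by
  induction n using Nat.twoStepInduction with
  | zero => rfl
  | one => rfl
  | more n ih _ =>
    have hchoose : (n + 2).choose 2 = n.choose 2 + 2 * n + 1 := by
      simp only [Nat.choose_succ_succ, Nat.choose_one_right, Nat.choose_zero_right]
      ring
    rw [hchoose, Nat.add_div_right n two_pos, pow_succ, pow_add, pow_mul, ih]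
    simp [pow_succ]

section Inversions

variable {α M : Type*} [Fintype α] [LinearOrder α] [CommMonoid M] {w : α → α → M}
  {σ : α → α}

theorem prod_nonInversions_eq_mul_prod_inversions (hw : ∀ a b, w a b * w b a = 1)
    (hσ : Function.Bijective σ) :
    ∏ p : α × α with p.1 < p.2 ∧ σ p.1 < σ p.2, w (σ p.1) (σ p.2) =
      (∏ p : α × α with p.1 < p.2, w p.1 p.2) *
        ∏ p : α × α with p.1 < p.2 ∧ σ p.2 < σ p.1, w (σ p.1) (σ p.2) := by
  have hreindex : ∏ p : α × α with p.1 < p.2, w p.1 p.2 =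
      ∏ p : α × α with σ p.1 < σ p.2, w (σ p.1) (σ p.2) := by
    rw [prod_filter, prod_filter]
    exact (Fintype.prod_bijective (Prod.map σ σ) (hσ.prodMap hσ) _ _ fun _ => rfl).symm
  have hsplit : ∏ p : α × α with σ p.1 < σ p.2, w (σ p.1) (σ p.2) =
      (∏ p : α × α with p.1 < p.2 ∧ σ p.1 < σ p.2, w (σ p.1) (σ p.2)) *
        ∏ p : α × α with p.2 < p.1 ∧ σ p.1 < σ p.2, w (σ p.1) (σ p.2) := by
    rw [← prod_filter_mul_prod_filter_not _ (fun p : α × α => p.1 < p.2), filter_filter,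
      filter_filter]
    congr 1 <;> refine prod_congr (filter_congr fun p _ => ?_) fun _ _ => rfl
    · exact and_comm
    · constructor
      · rintro ⟨hσp, hp⟩
        exact ⟨(not_lt.1 hp).lt_of_ne fun h => hσp.ne (congrArg σ h.symm), hσp⟩
      · rintro ⟨hp, hσp⟩
        exact ⟨hσp, not_lt.2 hp.le⟩
  have hswap : ∏ p : α × α with p.2 < p.1 ∧ σ p.1 < σ p.2, w (σ p.1) (σ p.2) =
      ∏ p : α × α with p.1 < p.2 ∧ σ p.2 < σ p.1, w (σ p.2) (σ p.1) :=
    prod_equiv (Equiv.prodComm α α) (by simp) fun _ _ => rfl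
  have hcancel : (∏ p : α × α with p.1 < p.2 ∧ σ p.2 < σ p.1, w (σ p.2) (σ p.1)) *
      ∏ p : α × α with p.1 < p.2 ∧ σ p.2 < σ p.1, w (σ p.1) (σ p.2) = 1 := by
    rw [← prod_mul_distrib]
    exact prod_eq_one fun p _ => hw _ _
  rw [hreindex, hsplit, hswap, mul_assoc, hcancel, mul_one]

end Inversions

section QEpsilon

variable {N : ℕ} {q : Fin N → Fin N → ℂ}

theorem prod_q_lt_eq_one (h2 : ∀ a b, q a b * q b a = 1)
    (h4 : ∀ a b, q a b = q (Fin.rev a) (Fin.rev b)) (hrev : ∀ a, q a (Fin.rev a) = 1) :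
    ∏ p : Fin N × Fin N with p.1 < p.2, q p.1 p.2 = 1 := by
  refine prod_involution (fun p _ => (Fin.rev p.2, Fin.rev p.1)) (fun p _ => ?_) (fun p _ => ?_)
    (fun p hp => by simpa using hp) (fun p _ => by simp)
  · rw [← h4]
    exact h2 _ _
  · intro hq hfix
    apply hq
    rw [← congrArg Prod.fst hfix, ← hrev (Fin.rev p.2), Fin.rev_rev]

theorem prod_neg_q_lt_eq_neg_one_pow (h2 : ∀ a b, q a b * q b a = 1)
    (h4 : ∀ a b, q a b = q (Fin.rev a) (Fin.rev b)) (hrev : ∀ a, q a (Fin.rev a) = 1) :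
    ∏ p : Fin N × Fin N with p.1 < p.2, -q p.1 p.2 = (-1) ^ (N / 2) := by
  rw [prod_neg, prod_q_lt_eq_one h2 h4 hrev, mul_one, Fintype.card_product_filter_lt,
    Fintype.card_fin, neg_one_pow_choose_two]

theorem epsQ_rev_of_injective (h4 : ∀ a b, q a b = q (Fin.rev a) (Fin.rev b))
    {i : Fin N → Fin N} (hi : Function.Injective i) :
    epsQ q (fun k => Fin.rev (i k)) =
      ∏ p : Fin N × Fin N with p.1 < p.2 ∧ i p.1 < i p.2, -q (i p.1) (i p.2) := by
  have hrev : Function.Injective (fun k => Fin.rev (i k)) := fun _ _ h => hi (Fin.rev_injective h)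
  rw [epsQ, if_pos hrev]
  simp only [Fin.rev_lt_rev, ← h4]

theorem epsQ_rev (h1 : ∀ a, q a a = 1) (h2 : ∀ a b, q a b * q b a = 1)
    (h3 : ∀ a b, q a b * q a (Fin.rev b) = 1) (h4 : ∀ a b, q a b = q (Fin.rev a) (Fin.rev b))
    (i : Fin N → Fin N) :
    epsQ q (fun k => Fin.rev (i k)) = (-1) ^ (N / 2) * epsQ q i := by
  by_cases hi : Function.Injective i
  · have hrev (a : Fin N) : q a (Fin.rev a) = 1 := by simpa [h1] using h3 a a
    rw [epsQ_rev_of_injective h4 hi, epsQ, if_pos hi, ← prod_neg_q_lt_eq_neg_one_pow h2 h4 hrev]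
    refine prod_nonInversions_eq_mul_prod_inversions (w := fun a b => -q a b) (fun a b => ?_)
      (Finite.injective_iff_bijective.mp hi)
    rw [neg_mul_neg, h2]
  · have hrev : ¬ Function.Injective (fun k => Fin.rev (i k)) :=
      fun h => hi (Function.Injective.of_comp (f := Fin.rev) h)
    rw [epsQ, epsQ, if_neg hi, if_neg hrev, mul_zero]

end QEpsilon

/-- primed-index invariance of the q-epsilon tensor:
`Σ_j ε_q^{j_1...j_N} g_{j_1 i_1}⋯g_{j_N i_N} = ε_q^{i_1'...i_N'}
 = (−1)^⌊N/2⌋ ε_q^{i_1...i_N}` for all tuples `i`, where `a' = Fin.rev a`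
and `g_{ab} = δ_{a,b'}`. -/
theorem epsQ_primed {N : ℕ} (q : Fin N → Fin N → ℂ)
    (h1 : ∀ a, q a a = 1)
    (h2 : ∀ a b, q a b * q b a = 1)
    (h3 : ∀ a b, q a b * q a (Fin.rev b) = 1)
    (h4 : ∀ a b, q a b = q (Fin.rev a) (Fin.rev b)) :
    ∀ i : Fin N → Fin N,
      (∑ j : Fin N → Fin N,
          epsQ q j * ∏ k, (if j k = Fin.rev (i k) then (1 : ℂ) else 0))
        = epsQ q (fun k => Fin.rev (i k)) ∧
      epsQ q (fun k => Fin.rev (i k)) = (-1 : ℂ) ^ (N / 2) * epsQ q i :=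
  fun i => ⟨Fintype.sum_mul_prod_ite_eq _ _, epsQ_rev h1 h2 h3 h4 i⟩
end

section
/- Contraction identity relating the q-antisymmetrizer in top and lower degrees: W^{i_1...i_{k−1} m}_{j_1...j_{k−1} m} (summed over m) = (N−k+1) · W^{i_1...i_{k−1}}_{j_1...j_{k−1}}, where W is the q-antisymmetrizer on (ℂ^N)^{⊗k} built from Λ^{ab}_{cd}=q(a,b)δ^a_dδ^b_c. -/
/-- `Λ` acting at positions `t, t+1` of `(ℂ^N)^{⊗k}` (identity if `t+1 ≥ k`):
built from `Λ^{ab}_{cd} = q(a,b) δ^a_d δ^b_c`, it maps `e_g` to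
`q(g t, g (t+1)) e_{g ∘ swap(t,t+1)}`. -/
def lamPos {N : ℕ} (q : Fin N → Fin N → ℂ) (k t : ℕ) :
    Matrix (Fin k → Fin N) (Fin k → Fin N) ℂ :=
  if h : t + 1 < k then
    fun f g =>
      if g = f ∘ (Equiv.swap (⟨t, Nat.lt_of_succ_lt h⟩ : Fin k) ⟨t + 1, h⟩)
      then q (f ⟨t, Nat.lt_of_succ_lt h⟩) (f ⟨t + 1, h⟩) else 0
  else 1

/-- The operators `𝓘_{1...m}` of the q-antisymmetrizer recursion:
`𝓘_{1} = I`, `𝓘_{1...m} = I − 𝓘_{1...m−1} Λ_{m−1,m}`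
(in 0-based positions `Λ_{m−1,m} = lamPos q k (m−2)`), realized as matrices on
`(ℂ^N)^{⊗k}`. -/
noncomputable def Ical {N : ℕ} (q : Fin N → Fin N → ℂ) (k : ℕ) :
    ℕ → Matrix (Fin k → Fin N) (Fin k → Fin N) ℂ
  | 0 => 1
  | 1 => 1
  | (m + 2) => 1 - Ical q k (m + 1) * lamPos q k m

/-- The q-antisymmetrizer `W_{1...m}` defined by the recursion
`W_{1...m} = 𝓘_{1...m} W_{1...m−1}`, `W_1 = I`. -/
noncomputable def Wmat {N : ℕ} (q : Fin N → Fin N → ℂ) (k : ℕ) :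
    ℕ → Matrix (Fin k → Fin N) (Fin k → Fin N) ℂ
  | 0 => 1
  | (m + 1) => Ical q k (m + 1) * Wmat q k m

/-! The matrices `Λ_t` are diagonally conjugate to the plain flips `P_t`: for the weight
`d f = ∏ q (f x) (f y)` over the inversions `x < y`, `f y < f x` of `f` and `D = diag d`,
one has `Λ_t = D P_t D⁻¹`. Hence `σ ↦ D P_σ D⁻¹` is a representation `ρ` of `S_k` extending the `Λ_t`. Unfolding the recursion,
`𝓘_{1...m+1} = Σ_{i ≤ m} sign(c_i) ρ(c_i)` for the cycles `c_i = (i i+1 ... m)`, which are coset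
representatives of `S_m` in `S_{m+1}`; so `W_k = Σ_σ sign σ ρ(σ)`, whence `Λ_t W_k = -W_k` and
`𝓘_{1...k} W_k = k W_k`. On `k+1` factors `W_{k+1} = (1 - (𝓘_{1...k} ⊗ 1) Λ_{k,k+1}) (W_k ⊗ 1)`,
and contracting the last index sends `W_k ⊗ 1` to `N W_k` and `Λ_{k,k+1} (W_k ⊗ 1)` to `W_k`. -/

open Equiv Matrix

section TensorOne

variable {R α : Type*} [Ring R] [Fintype α] {k : ℕ}

def traceLast (C : Matrix (Fin (k + 1) → α) (Fin (k + 1) → α) R) :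
    Matrix (Fin k → α) (Fin k → α) R :=
  fun i j => ∑ a, C (Fin.snoc i a) (Fin.snoc j a)

theorem traceLast_sub (C D : Matrix (Fin (k + 1) → α) (Fin (k + 1) → α) R) :
    traceLast (C - D) = traceLast C - traceLast D := by
  ext i j; simp [traceLast, Finset.sum_sub_distrib]

theorem sum_pi_snoc {M : Type*} [AddCommMonoid M] (F : (Fin (k + 1) → α) → M) :
    ∑ f, F f = ∑ i, ∑ a, F (Fin.snoc i a) :=
  ((Fin.snocEquiv fun _ => α).sum_comp F).symm.trans (Fintype.sum_prod_type_right _)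

variable [DecidableEq α]

def tensorOne :
    Matrix (Fin k → α) (Fin k → α) R →+* Matrix (Fin (k + 1) → α) (Fin (k + 1) → α) R :=
  ((reindexRingEquiv R ((Equiv.prodComm _ _).trans (Fin.snocEquiv fun _ => α))).toRingHom.comp
    (blockDiagonalRingHom _ _ R)).comp (Pi.constRingHom α _)

theorem tensorOne_snoc_snoc (B : Matrix (Fin k → α) (Fin k → α) R) (i j : Fin k → α) (a b : α) :
    tensorOne B (Fin.snoc i a) (Fin.snoc j b) = if a = b then B i j else 0 := by
  simp [tensorOne, blockDiagonal_apply]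

theorem traceLast_tensorOne (B : Matrix (Fin k → α) (Fin k → α) R) :
    traceLast (tensorOne B) = Fintype.card α • B := by
  ext i j; simp [traceLast, tensorOne_snoc_snoc]

theorem traceLast_tensorOne_mul (A : Matrix (Fin k → α) (Fin k → α) R)
    (C : Matrix (Fin (k + 1) → α) (Fin (k + 1) → α) R) :
    traceLast (tensorOne A * C) = A * traceLast C := by
  ext i j
  simp only [traceLast, mul_apply, sum_pi_snoc, tensorOne_snoc_snoc, ite_mul, zero_mul]
  simp only [Finset.sum_ite_eq, Finset.mem_univ, if_true, Finset.mul_sum]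
  exact Finset.sum_comm

end TensorOne

theorem snoc_comp_swap_castSucc {α : Type*} {k : ℕ} (i : Fin k → α) (a : α) (x y : Fin k) :
    (Fin.snoc i a : Fin (k + 1) → α) ∘ swap x.castSucc y.castSucc
      = Fin.snoc (i ∘ swap x y) a := by
  ext z
  cases z using Fin.lastCases with
  | last =>
    simp [swap_apply_of_ne_of_ne (Fin.castSucc_lt_last x).ne' (Fin.castSucc_lt_last y).ne']
  | cast z =>
    simp only [Function.comp_apply, swap_apply_def, Fin.castSucc_inj, Fin.snoc_castSucc]
    split_ifs <;> simp

theorem snoc_snoc_comp_swap {α : Type*} {k : ℕ} (i : Fin k → α) (a b : α) :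
    (Fin.snoc (Fin.snoc i a) b : Fin (k + 2) → α) ∘ swap (Fin.last k).castSucc (Fin.last (k + 1))
      = Fin.snoc (Fin.snoc i b) a := by
  ext z
  cases z using Fin.lastCases with
  | last => simp
  | cast z =>
    cases z using Fin.lastCases with
    | last => simp
    | cast z => simp [swap_apply_of_ne_of_ne, Fin.castSucc_ne_last]

theorem swap_apply_lt_swap_apply_iff {k : ℕ} {a b x y : Fin k} (hab : (a : ℕ) + 1 = b)
    (hxy : (x, y) ≠ (a, b)) (hyx : (x, y) ≠ (b, a)) : swap a b x < swap a b y ↔ x < y := by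
  simp only [ne_eq, Prod.mk.injEq, not_and] at hxy hyx
  simp only [swap_apply_def, Fin.lt_def]
  split_ifs <;> simp_all <;> omega

theorem prod_lt_comp_swap {M : Type*} [CommMonoid M] {k : ℕ} {a b : Fin k}
    (hab : (a : ℕ) + 1 = b) (F : Fin k → Fin k → M) :
    (∏ p : Fin k × Fin k, if p.1 < p.2 then F p.1 p.2 else 1) * F b a
      = (∏ p : Fin k × Fin k, if p.1 < p.2 then F (swap a b p.1) (swap a b p.2) else 1)
        * F a b := by
  have hlt : a < b := Fin.lt_def.mpr (by omega)
  have hreindex : (∏ p : Fin k × Fin k, if p.1 < p.2 then F (swap a b p.1) (swap a b p.2) else 1)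
      = ∏ p : Fin k × Fin k, if swap a b p.1 < swap a b p.2 then F p.1 p.2 else 1 :=
    Fintype.prod_equiv ((swap a b).prodCongr (swap a b)) _ _ fun p => by simp
  rw [hreindex, ← Fintype.prod_ite_eq' (b, a) (fun _ => F b a),
    ← Fintype.prod_ite_eq' (a, b) (fun _ => F a b), ← Finset.prod_mul_distrib,
    ← Finset.prod_mul_distrib]
  refine Fintype.prod_congr _ _ fun ⟨x, y⟩ => ?_
  by_cases h₁ : (x, y) = (a, b)
  · obtain ⟨rfl, rfl⟩ := Prod.mk.inj h₁
    simp [hlt, hlt.ne', not_lt_of_gt hlt]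
  by_cases h₂ : (x, y) = (b, a)
  · obtain ⟨rfl, rfl⟩ := Prod.mk.inj h₂
    simp [hlt, hlt.ne', not_lt_of_gt hlt]
  simp [h₁, h₂, swap_apply_lt_swap_apply_iff hab h₁ h₂]

theorem cycleIcc_eq_swap {n : ℕ} {j j' : Fin n} (hj : (j : ℕ) + 1 = j') :
    Fin.cycleIcc j j' = swap j j' := by
  have : NeZero n := NeZero.of_pos (by omega)
  have hjj' : j < j' := Fin.lt_def.mpr (by omega)
  ext x
  rcases lt_trichotomy x j with hx | hx | hx
  · rw [Fin.cycleIcc_of_lt hx, swap_apply_of_ne_of_ne hx.ne (hx.trans hjj').ne]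
  · subst hx
    rw [Fin.cycleIcc_of_ge_of_lt le_rfl hjj', swap_apply_left]
    simp only [Fin.val_add_one_of_lt' (by omega : (x : ℕ) + 1 < n), hj]
  rcases lt_or_eq_of_le (Fin.le_def.mpr (by rw [Fin.lt_def] at hx; omega) : j' ≤ x) with hx' | hx'
  · rw [Fin.cycleIcc_of_gt hx', swap_apply_of_ne_of_ne hx.ne' hx'.ne']
  · subst hx'
    rw [Fin.cycleIcc_of_last hjj'.le, swap_apply_right]

theorem cycleIcc_mul_swap {n : ℕ} {i j j' : Fin n} (hij : i ≤ j) (hj : (j : ℕ) + 1 = j') :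
    Fin.cycleIcc i j * swap j j' = Fin.cycleIcc i j' := by
  have : NeZero n := NeZero.of_pos (by omega)
  rw [← cycleIcc_eq_swap hj]
  exact DFunLike.coe_injective (Fin.cycleIcc.trans hij (Fin.le_def.mpr (by omega)))

def lowPerms (k m : ℕ) : Finset (Perm (Fin k)) :=
  Finset.univ.filter fun σ => ∀ x : Fin k, m ≤ x → σ x = x

theorem mem_lowPerms {k m : ℕ} {σ : Perm (Fin k)} :
    σ ∈ lowPerms k m ↔ ∀ x : Fin k, m ≤ x → σ x = x := by
  simp [lowPerms]

theorem lowPerms_zero (k : ℕ) : lowPerms k 0 = {1} := by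
  ext σ
  simp [mem_lowPerms, Equiv.ext_iff]

theorem lowPerms_self (k : ℕ) : lowPerms k k = Finset.univ := by
  ext σ
  simp [mem_lowPerms, fun x : Fin k => not_le.mpr x.isLt]

theorem sum_lowPerms_succ {M : Type*} [AddCommMonoid M] {k : ℕ} (m : Fin k)
    (F : Perm (Fin k) → M) :
    ∑ σ ∈ lowPerms k (m + 1), F σ
      = ∑ i ∈ Finset.Iic m, ∑ τ ∈ lowPerms k m, F (Fin.cycleIcc i m * τ) := by
  have : NeZero k := NeZero.of_pos m.pos
  rw [← Finset.sum_product']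
  symm
  refine Finset.sum_nbij' (fun p => Fin.cycleIcc p.1 m * p.2)
    (fun σ => (σ m, (Fin.cycleIcc (σ m) m)⁻¹ * σ)) ?_ ?_ ?_ ?_ fun _ _ => rfl
  · rintro ⟨i, τ⟩ hp
    simp only [Finset.mem_product, Finset.mem_Iic, mem_lowPerms] at hp ⊢
    intro x hx
    rw [Perm.mul_apply, hp.2 x (by omega), Fin.cycleIcc_of_gt (Fin.lt_def.mpr (by omega))]
  · intro σ hσ
    rw [mem_lowPerms] at hσ
    have hσm : σ m ≤ m := by
      by_contra! h
      exact h.ne' (σ.injective (hσ _ (by rw [Fin.lt_def] at h; omega)))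
    simp only [Finset.mem_product, Finset.mem_Iic, mem_lowPerms]
    refine ⟨hσm, fun x hx => ?_⟩
    rw [Perm.mul_apply, Perm.inv_eq_iff_eq]
    rcases eq_or_lt_of_le (Fin.le_def.mpr hx) with rfl | hx'
    · exact (Fin.cycleIcc_of_last hσm).symm
    · rw [hσ x (by rw [Fin.lt_def] at hx'; omega), Fin.cycleIcc_of_gt hx']
  · rintro ⟨i, τ⟩ hp
    simp only [Finset.mem_product, Finset.mem_Iic, mem_lowPerms] at hp
    have hτm : (Fin.cycleIcc i m * τ) m = i := by
      rw [Perm.mul_apply, hp.2 m le_rfl, Fin.cycleIcc_of_last hp.1]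
    simp [hτm]
  · intro σ _
    simp

theorem map_mul_sum_sign_smul {ι A : Type*} [Fintype ι] [DecidableEq ι] [Ring A]
    (ρ : Perm ι →* A) (τ : Perm ι) :
    ρ τ * ∑ σ, Perm.sign σ • ρ σ = Perm.sign τ • ∑ σ, Perm.sign σ • ρ σ := by
  rw [Finset.mul_sum, Finset.smul_sum]
  refine Fintype.sum_equiv (Equiv.mulLeft τ) _ _ fun σ => ?_
  simp only [coe_mulLeft, map_mul, mul_smul_comm, smul_smul, ← mul_assoc,
    Int.units_mul_self, one_mul]

def twistedPermHom {K ι α : Type*} [Field K] [Fintype ι] [DecidableEq ι] [Fintype α]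
    [DecidableEq α] (d : (ι → α) → K) (hd : ∀ f, d f ≠ 0) : Perm ι →* Matrix (ι → α) (ι → α) K where
  toFun σ := Matrix.of fun f g => if g = f ∘ σ then d f / d g else 0
  map_one' := by
    ext f g
    simp only [of_apply, Perm.coe_one, Function.comp_id, one_apply, eq_comm (a := g)]
    split_ifs with h
    · rw [h, div_self (hd g)]
    · rfl
  map_mul' σ τ := by
    ext f g
    simp only [mul_apply, of_apply, ite_mul, zero_mul, Finset.sum_ite_eq', Finset.mem_univ,
      if_true]
    simp only [mul_ite, mul_zero, div_mul_div_cancel₀ (hd _), Perm.coe_mul, Function.comp_assoc]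
    rfl

section Lambda

variable {N : ℕ} (q : Fin N → Fin N → ℂ)

theorem Ical_add_two (k m : ℕ) : Ical q k (m + 2) = 1 - Ical q k (m + 1) * lamPos q k m :=
  rfl

theorem Wmat_succ (k m : ℕ) : Wmat q k (m + 1) = Ical q k (m + 1) * Wmat q k m := rfl

theorem lamPos_apply {k t : ℕ} (h : t + 1 < k) (f g : Fin k → Fin N) :
    lamPos q k t f g = if g = f ∘ swap ⟨t, by omega⟩ ⟨t + 1, h⟩
      then q (f ⟨t, by omega⟩) (f ⟨t + 1, h⟩) else 0 := by
  simp only [lamPos, h, ↓reduceDIte]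

theorem lamPos_mul_apply {k t : ℕ} (h : t + 1 < k)
    (A : Matrix (Fin k → Fin N) (Fin k → Fin N) ℂ) (f g : Fin k → Fin N) :
    (lamPos q k t * A) f g
      = q (f ⟨t, by omega⟩) (f ⟨t + 1, h⟩) * A (f ∘ swap ⟨t, by omega⟩ ⟨t + 1, h⟩) g := by
  simp [mul_apply, lamPos_apply q h, ite_mul]

theorem lamPos_succ {k t : ℕ} (h : t + 1 < k) :
    lamPos q (k + 1) t = tensorOne (lamPos q k t) := by
  ext f g
  obtain ⟨i, a, rfl⟩ : ∃ i a, f = Fin.snoc i a := ⟨_, _, (Fin.snoc_init_self f).symm⟩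
  obtain ⟨j, b, rfl⟩ : ∃ j b, g = Fin.snoc j b := ⟨_, _, (Fin.snoc_init_self g).symm⟩
  have hx : (⟨t, by omega⟩ : Fin (k + 1)) = Fin.castSucc ⟨t, by omega⟩ := rfl
  have hy : (⟨t + 1, by omega⟩ : Fin (k + 1)) = Fin.castSucc ⟨t + 1, h⟩ := rfl
  rw [tensorOne_snoc_snoc, lamPos_apply q h, lamPos_apply q (by omega), hx, hy,
    snoc_comp_swap_castSucc]
  simp only [Fin.snoc_inj, Fin.snoc_castSucc]
  by_cases hab : a = b <;> simp [hab, eq_comm]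

theorem traceLast_lamPos_mul_tensorOne (h1 : ∀ a, q a a = 1) {k : ℕ}
    (B : Matrix (Fin (k + 1) → Fin N) (Fin (k + 1) → Fin N) ℂ) :
    traceLast (lamPos q (k + 2) k * tensorOne B) = B := by
  ext f j
  obtain ⟨i, a, rfl⟩ : ∃ i a, f = Fin.snoc i a := ⟨_, _, (Fin.snoc_init_self f).symm⟩
  have hx : (⟨k, by omega⟩ : Fin (k + 2)) = (Fin.last k).castSucc := rfl
  have hy : (⟨k + 1, by omega⟩ : Fin (k + 2)) = Fin.last (k + 1) := rfl
  simp only [traceLast, lamPos_mul_apply q (Nat.lt_succ_self _), hx, hy, snoc_snoc_comp_swap,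
    tensorOne_snoc_snoc, Fin.snoc_castSucc, Fin.snoc_last, mul_ite, mul_zero, Finset.sum_ite_eq,
    Finset.mem_univ, if_true, h1, one_mul]

theorem Ical_succ_eq_tensorOne {k : ℕ} :
    ∀ m, m ≤ k → Ical q (k + 1) m = tensorOne (Ical q k m)
  | 0, _ => (map_one _).symm
  | 1, _ => (map_one _).symm
  | m + 2, h => by
    rw [Ical_add_two, Ical_add_two, map_sub, map_one, map_mul, ← lamPos_succ q (by omega),
      Ical_succ_eq_tensorOne (m + 1) (by omega)]

theorem Wmat_succ_eq_tensorOne {k : ℕ} (m : ℕ) (hm : m ≤ k) :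
    Wmat q (k + 1) m = tensorOne (Wmat q k m) := by
  induction m with
  | zero => exact (map_one _).symm
  | succ m ih =>
    rw [Wmat_succ, Wmat_succ, map_mul, Ical_succ_eq_tensorOne q _ hm, ih (by omega)]

def inversionFactor (a b : Fin N) : ℂ := if b < a then q a b else 1

noncomputable def inversionWeight {k : ℕ} (f : Fin k → Fin N) : ℂ :=
  ∏ p : Fin k × Fin k, if p.1 < p.2 then inversionFactor q (f p.1) (f p.2) else 1

theorem inversionFactor_ne_zero (h2 : ∀ a b, q a b * q b a = 1) (a b : Fin N) :
    inversionFactor q a b ≠ 0 := by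
  unfold inversionFactor
  split_ifs
  · exact left_ne_zero_of_mul_eq_one (h2 a b)
  · exact one_ne_zero

theorem inversionFactor_eq_mul (h1 : ∀ a, q a a = 1) (h2 : ∀ a b, q a b * q b a = 1)
    (a b : Fin N) :
    inversionFactor q a b = q a b * inversionFactor q b a := by
  unfold inversionFactor
  rcases lt_trichotomy a b with h | rfl | h
  · simp [h, lt_asymm h, h2]
  · simp [h1]
  · simp [h, lt_asymm h]

theorem inversionWeight_ne_zero (h2 : ∀ a b, q a b * q b a = 1) {k : ℕ} (f : Fin k → Fin N) :
    inversionWeight q f ≠ 0 :=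
  Finset.prod_ne_zero_iff.mpr fun p _ => by
    split_ifs
    · exact inversionFactor_ne_zero q h2 _ _
    · exact one_ne_zero

theorem inversionWeight_eq_mul_inversionWeight_comp_swap (h1 : ∀ a, q a a = 1)
    (h2 : ∀ a b, q a b * q b a = 1) {k : ℕ} {a b : Fin k} (hab : (a : ℕ) + 1 = b)
    (f : Fin k → Fin N) :
    inversionWeight q f = q (f a) (f b) * inversionWeight q (f ∘ swap a b) := by
  have key := prod_lt_comp_swap hab fun x y => inversionFactor q (f x) (f y)
  rw [inversionFactor_eq_mul q h1 h2 (f a)] at key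
  refine mul_right_cancel₀ (inversionFactor_ne_zero q h2 (f b) (f a)) (key.trans ?_)
  simp only [inversionWeight, Function.comp_apply]
  ring

theorem exists_hom_eq_lamPos (h1 : ∀ a, q a a = 1) (h2 : ∀ a b, q a b * q b a = 1) (k : ℕ) :
    ∃ ρ : Perm (Fin k) →* Matrix (Fin k → Fin N) (Fin k → Fin N) ℂ,
      ∀ t (h : t + 1 < k), ρ (swap ⟨t, by omega⟩ ⟨t + 1, h⟩) = lamPos q k t := by
  refine ⟨twistedPermHom (inversionWeight q) (inversionWeight_ne_zero q h2), fun t h => ?_⟩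
  ext f g
  rw [lamPos_apply q h]
  simp only [twistedPermHom, MonoidHom.coe_mk, OneHom.coe_mk, of_apply]
  split_ifs with hg
  · rw [hg, inversionWeight_eq_mul_inversionWeight_comp_swap q h1 h2
      (a := ⟨t, by omega⟩) (b := ⟨t + 1, h⟩) rfl f,
      mul_div_cancel_right₀ _ (inversionWeight_ne_zero q h2 _)]
  · rfl

section Representation

variable {k : ℕ} (ρ : Perm (Fin k) →* Matrix (Fin k → Fin N) (Fin k → Fin N) ℂ)
  (hρ : ∀ t (h : t + 1 < k), ρ (swap ⟨t, by omega⟩ ⟨t + 1, h⟩) = lamPos q k t)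
include hρ

theorem Ical_eq_sum (m : ℕ) (hm : m < k) :
    Ical q k (m + 1) = ∑ i ∈ Finset.Iic (⟨m, hm⟩ : Fin k),
      Perm.sign (Fin.cycleIcc i ⟨m, hm⟩) • ρ (Fin.cycleIcc i ⟨m, hm⟩) := by
  induction m with
  | zero =>
    have : NeZero k := NeZero.of_pos hm
    have hIic : Finset.Iic (⟨0, hm⟩ : Fin k) = {⟨0, hm⟩} := by
      ext x
      simp only [Finset.mem_Iic, Finset.mem_singleton, Fin.le_iff_val_le_val, Fin.ext_iff]
      omega
    rw [hIic, Finset.sum_singleton, Fin.cycleIcc_eq, map_one, map_one, one_smul]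
    rfl
  | succ m ih =>
    have : NeZero k := NeZero.of_pos (by omega)
    have hIic :
        Finset.Iic (⟨m + 1, hm⟩ : Fin k) = insert ⟨m + 1, hm⟩ (Finset.Iic ⟨m, by omega⟩) := by
      ext x
      simp only [Finset.mem_Iic, Finset.mem_insert, Fin.le_iff_val_le_val, Fin.ext_iff]
      omega
    rw [Ical_add_two, ih (by omega), ← hρ m hm, Finset.sum_mul, hIic,
      Finset.sum_insert (by simp [Fin.le_iff_val_le_val]), Fin.cycleIcc_eq, sub_eq_add_neg,
      ← Finset.sum_neg_distrib, map_one, map_one, one_smul]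
    congr 1
    refine Finset.sum_congr rfl fun i hi => ?_
    rw [Finset.mem_Iic] at hi
    have hsign : Perm.sign (Fin.cycleIcc i ⟨m + 1, hm⟩)
        = -Perm.sign (Fin.cycleIcc i ⟨m, by omega⟩) := by
      rw [← cycleIcc_mul_swap hi rfl, Perm.sign_mul, Perm.sign_swap (by simp), mul_neg_one]
    rw [smul_mul_assoc, ← map_mul, cycleIcc_mul_swap hi rfl, hsign, Units.neg_smul]

theorem Wmat_eq_sum (m : ℕ) (hm : m ≤ k) :
    Wmat q k m = ∑ σ ∈ lowPerms k m, Perm.sign σ • ρ σ := by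
  induction m with
  | zero =>
    rw [lowPerms_zero, Finset.sum_singleton, map_one, map_one, one_smul]
    rfl
  | succ m ih =>
    rw [Wmat_succ, Ical_eq_sum q ρ hρ m hm, ih (by omega), Finset.sum_mul_sum]
    refine ((sum_lowPerms_succ ⟨m, hm⟩ _).trans ?_).symm
    refine Finset.sum_congr rfl fun i _ => Finset.sum_congr rfl fun τ _ => ?_
    rw [map_mul, map_mul, smul_mul_smul_comm]

theorem lamPos_mul_Wmat_self {t : ℕ} (ht : t + 1 < k) :
    lamPos q k t * Wmat q k k = -Wmat q k k := by
  rw [Wmat_eq_sum q ρ hρ k le_rfl, lowPerms_self, ← hρ t ht, map_mul_sum_sign_smul,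
    Perm.sign_swap (by simp [Fin.ext_iff]), Units.neg_smul, one_smul]

end Representation

theorem Ical_mul_Wmat_self (h1 : ∀ a, q a a = 1) (h2 : ∀ a b, q a b * q b a = 1) {k : ℕ}
    (m : ℕ) (hm : m + 1 ≤ k) : Ical q k (m + 1) * Wmat q k k = ((m : ℂ) + 1) • Wmat q k k := by
  obtain ⟨ρ, hρ⟩ := exists_hom_eq_lamPos q h1 h2 k
  induction m with
  | zero => simp [Ical]
  | succ m ih =>
    rw [Ical_add_two, sub_mul, one_mul, mul_assoc, lamPos_mul_Wmat_self q ρ hρ (by omega),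
      mul_neg, ih (by omega), sub_neg_eq_add]
    push_cast
    module

theorem traceLast_Wmat_succ_self (h1 : ∀ a, q a a = 1) (h2 : ∀ a b, q a b * q b a = 1) (k : ℕ) :
    traceLast (Wmat q (k + 1) (k + 1)) = ((N : ℂ) - k) • Wmat q k k := by
  cases k with
  | zero =>
    rw [Wmat_succ, Ical, one_mul, Wmat_succ_eq_tensorOne q 0 le_rfl, traceLast_tensorOne,
      Fintype.card_fin, Nat.cast_zero, sub_zero, Nat.cast_smul_eq_nsmul]
  | succ k =>
    rw [Wmat_succ, Ical_add_two, sub_mul, one_mul, mul_assoc,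
      Wmat_succ_eq_tensorOne q (k + 1) le_rfl, Ical_succ_eq_tensorOne q (k + 1) le_rfl,
      traceLast_sub, traceLast_tensorOne, traceLast_tensorOne_mul,
      traceLast_lamPos_mul_tensorOne q h1, Ical_mul_Wmat_self q h1 h2 k le_rfl, Fintype.card_fin]
    push_cast
    module

end Lambda

/-- contraction identity for the q-antisymmetrizer:
`Σ_m W^{i_1...i_k m}_{j_1...j_k m} = (N−(k+1)+1) · W^{i_1...i_k}_{j_1...j_k}`,
i.e. contracting the last upper and lower index of the antisymmetrizer on
`k+1` factors yields `(N−k)` times the antisymmetrizer on `k` factors. -/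
theorem Wmat_contraction {N : ℕ} (q : Fin N → Fin N → ℂ)
    (h1 : ∀ a, q a a = 1)
    (h2 : ∀ a b, q a b * q b a = 1) :
    ∀ (k : ℕ) (i j : Fin k → Fin N),
      ∑ m : Fin N, Wmat q (k + 1) (k + 1) (Fin.snoc i m) (Fin.snoc j m)
        = ((N : ℂ) - (k : ℂ)) * Wmat q k k i j := by
  intro k i j
  exact congrFun (congrFun (traceLast_Wmat_succ_self q h1 h2 k) i) j
end
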